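/- The unique bounded fixed point V* of the Bellman operator T is concave as a function of (p,w) on the convex set W, and for every fixed p ∈ [0,1] the map w ↦ V*(p,w) is weakly decreasing on [m(p), M(p)]. -/

import Mathlib

noncomputable section

/-- Expected payoff of action `a` at belief `p` (= probability of state `ω₁`, encoded `true`). -/
def euP {A : Type*} (u : A → Bool → ℝ) (a : A) (p : ℝ) : ℝ :=
  (1 - p) * u a false + p * u a true

/-- The agent's best static payoff `m(p)` at belief `p`. -/
def mFun {A : Type*} [Fintype A] [Nonempty A] (u : A → Bool → ℝ) (p : ℝ) : ℝ :=
  Finset.univ.sup' Finset.univ_nonempty (fun a => euP u a p)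

/-- The agent's full-information payoff `M(p)` at belief `p`. -/
def MFun {A : Type*} [Fintype A] [Nonempty A] (u : A → Bool → ℝ) (p : ℝ) : ℝ :=
  (1 - p) * Finset.univ.sup' Finset.univ_nonempty (fun a => u a false)
    + p * Finset.univ.sup' Finset.univ_nonempty (fun a => u a true)

/-- The set `W` of pairs (belief, promised utility). -/
def Wset {A : Type*} [Fintype A] [Nonempty A] (u : A → Bool → ℝ) : Set (ℝ × ℝ) :=
  {pw | pw.1 ∈ Set.Icc (0 : ℝ) 1 ∧ mFun u pw.1 ≤ pw.2 ∧ pw.2 ≤ MFun u pw.1}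

/-- A family: for each signal a probability, a posterior belief, a promised continuation
utility, and a recommended action. -/
structure Fam (A S : Type*) where
  prob : S → ℝ
  belief : S → ℝ
  promise : S → ℝ
  act : S → A

/-- Feasibility of the family `f` at the point `pw = (p, w) ∈ W`. -/
def Feasible {A S : Type*} [Fintype A] [Nonempty A] [Fintype S]
    (u : A → Bool → ℝ) (δ : ℝ) (pw : ℝ × ℝ) (f : Fam A S) : Prop :=
  (∀ s, f.prob s ∈ Set.Icc (0 : ℝ) 1) ∧
  (∀ s, (f.belief s, f.promise s) ∈ Wset u) ∧
  (∀ s, (1 - δ) * euP u (f.act s) (f.belief s) + δ * f.promise s ≥ mFun u (f.belief s)) ∧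
  (∑ s, f.prob s * ((1 - δ) * euP u (f.act s) (f.belief s) + δ * f.promise s) ≥ pw.2) ∧
  (∑ s, f.prob s * f.belief s = pw.1) ∧
  (∑ s, f.prob s = 1)

/-- The principal's payoff from the family `f`, given continuation value function `V`. -/
def famPayoff {A S : Type*} [Fintype S] (v : A → Bool → ℝ) (δ : ℝ) (V : ℝ × ℝ → ℝ)
    (f : Fam A S) : ℝ :=
  ∑ s, f.prob s * ((1 - δ) * euP v (f.act s) (f.belief s) + δ * V (f.belief s, f.promise s))

/-- The Bellman operator `T`. -/
def bellman {A S : Type*} [Fintype A] [Nonempty A] [Fintype S]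
    (u v : A → Bool → ℝ) (δ : ℝ) (V : ℝ × ℝ → ℝ) (pw : ℝ × ℝ) : ℝ :=
  sSup {x | ∃ f : Fam A S, Feasible u δ pw f ∧ x = famPayoff v δ V f}

/-- `V` is bounded on `W`. -/
def BddOnW {A : Type*} [Fintype A] [Nonempty A] (u : A → Bool → ℝ) (V : ℝ × ℝ → ℝ) : Prop :=
  ∃ C : ℝ, ∀ pw ∈ Wset u, |V pw| ≤ C


/-!
Iterating the Bellman operator from `0` converges to `V*` because `T` is a `δ`-contraction, so
concavity of `V*` follows once `T` preserves concavity. Given near-optimal families at two points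
of `W`, their mixture is feasible at the mixed point and earns the mixed payoff; pooling its
signals by recommended action brings it back to at most `|A| ≤ |S|` signals, keeps obedience
(each obedience region is convex) and, by Jensen, does not lower a concave continuation value.
Monotonicity in `w` holds because lowering the promise only relaxes promise keeping.
-/

open Finset Filter Topology Function

section

variable {A ι ι' S : Type*}

lemma euP_combo (u : A → Bool → ℝ) (c : A) {a b : ℝ} (x y : ℝ) (hab : a + b = 1) :
    euP u c (a * x + b * y) = a * euP u c x + b * euP u c y := by
  unfold euP
  linear_combination (-u c false) * hab

lemma exists_euP_le [Finite A] (v : A → Bool → ℝ) :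
    ∃ B, ∀ a, ∀ p ∈ Set.Icc (0 : ℝ) 1, euP v a p ≤ B := by
  obtain ⟨B, hB⟩ := (Set.finite_range (uncurry v)).bddAbove
  refine ⟨B, fun a p hp => ?_⟩
  have h0 : v a false ≤ B := hB ⟨(a, false), rfl⟩
  have h1 : v a true ≤ B := hB ⟨(a, true), rfl⟩
  unfold euP
  nlinarith [hp.1, hp.2]

section Payoffs

variable [Fintype A] [Nonempty A] (u : A → Bool → ℝ)

lemma euP_le_mFun (a : A) (p : ℝ) : euP u a p ≤ mFun u p :=
  le_sup' (fun a => euP u a p) (mem_univ a)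

lemma exists_euP_eq_mFun (p : ℝ) : ∃ a, euP u a p = mFun u p := by
  obtain ⟨a, -, h⟩ := exists_mem_eq_sup' univ_nonempty (fun a => euP u a p)
  exact ⟨a, h.symm⟩

lemma mFun_zero_eq_MFun : mFun u 0 = MFun u 0 := by
  simp [mFun, MFun, euP]

lemma mFun_one_eq_MFun : mFun u 1 = MFun u 1 := by
  simp [mFun, MFun, euP]

lemma MFun_eq_endpoints (p : ℝ) : MFun u p = (1 - p) * MFun u 0 + p * MFun u 1 := by
  simp [MFun]

lemma convexOn_mFun : ConvexOn ℝ Set.univ (mFun u) :=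
  ⟨convex_univ, fun x _ y _ a b ha hb hab => sup'_le _ _ fun c _ => by
    simp only [smul_eq_mul, euP_combo u c x y hab]
    gcongr <;> apply euP_le_mFun⟩

lemma concaveOn_MFun : ConcaveOn ℝ Set.univ (MFun u) :=
  ⟨convex_univ, fun x _ y _ a b _ _ hab => le_of_eq <| by
    simp only [smul_eq_mul, MFun]
    linear_combination (univ.sup' univ_nonempty (fun a => u a false)) * hab⟩

lemma convex_Wset : Convex ℝ (Wset u) := by
  have hIcc : Convex ℝ (Set.Icc (0 : ℝ) 1) := convex_Icc 0 1
  convert ((convexOn_mFun u).subset (Set.subset_univ _) hIcc).convex_epigraph.inter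
    ((concaveOn_MFun u).subset (Set.subset_univ _) hIcc).convex_hypograph using 1
  ext z
  simp only [Wset, Set.mem_inter_iff, Set.mem_ofPred_eq]
  tauto

end Payoffs

lemma ConcaveOn.sum_mul_le_mul_map_centerMass {E : Type*} [AddCommGroup E] [Module ℝ E]
    {s : Set E} {F : E → ℝ} {t : Finset ι} {w : ι → ℝ} {z : ι → E} (hF : ConcaveOn ℝ s F)
    (h₀ : ∀ i ∈ t, 0 ≤ w i) (h₁ : 0 < ∑ i ∈ t, w i) (hz : ∀ i ∈ t, z i ∈ s) :
    ∑ i ∈ t, w i * F (z i) ≤ (∑ i ∈ t, w i) * F (t.centerMass w z) := by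
  have := hF.le_map_centerMass h₀ h₁ hz
  rwa [centerMass, smul_eq_mul, inv_mul_le_iff₀ h₁] at this

lemma concaveOn_of_tendsto {E α : Type*} [AddCommGroup E] [Module ℝ E] {s : Set E}
    {l : Filter α} [l.NeBot] {F : α → E → ℝ} {f : E → ℝ} (hF : ∀ n, ConcaveOn ℝ s (F n))
    (hlim : ∀ x ∈ s, Tendsto (fun n => F n x) l (𝓝 (f x))) : ConcaveOn ℝ s f := by
  obtain ⟨n₀⟩ := nonempty_of_neBot l
  refine ⟨(hF n₀).1, fun x hx y hy a b ha hb hab => ?_⟩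
  exact le_of_tendsto_of_tendsto' (((hlim x hx).const_smul a).add ((hlim y hy).const_smul b))
    (hlim _ ((hF n₀).1 hx hy ha hb hab)) fun n => (hF n).2 hx hy ha hb hab

namespace Fam

variable [Fintype ι]

def point (f : Fam A ι) (i : ι) : ℝ × ℝ := (f.belief i, f.promise i)

def expect (f : Fam A ι) (F : A → ℝ × ℝ → ℝ) : ℝ :=
  ∑ i, f.prob i * F (f.act i) (f.point i)

lemma expect_le_expect_add {f : Fam A ι} {F G : A → ℝ × ℝ → ℝ} {c : ℝ}
    (hprob : ∀ i, 0 ≤ f.prob i) (hsum : ∑ i, f.prob i = 1)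
    (h : ∀ i, F (f.act i) (f.point i) ≤ G (f.act i) (f.point i) + c) :
    f.expect F ≤ f.expect G + c := by
  calc f.expect F ≤ ∑ i, f.prob i * (G (f.act i) (f.point i) + c) :=
        sum_le_sum fun i _ => mul_le_mul_of_nonneg_left (h i) (hprob i)
    _ = f.expect G + c := by
        simp only [expect, mul_add, sum_add_distrib, ← sum_mul, hsum, one_mul]

lemma expect_le {f : Fam A ι} {F : A → ℝ × ℝ → ℝ} {c : ℝ} (hprob : ∀ i, 0 ≤ f.prob i)
    (hsum : ∑ i, f.prob i = 1) (h : ∀ i, F (f.act i) (f.point i) ≤ c) : f.expect F ≤ c := by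
  simpa [expect] using expect_le_expect_add (G := fun _ _ => 0) hprob hsum (by simpa using h)

def mix (a b : ℝ) (f : Fam A ι) (g : Fam A ι') : Fam A (ι ⊕ ι') where
  prob := Sum.elim (a * f.prob ·) (b * g.prob ·)
  belief := Sum.elim f.belief g.belief
  promise := Sum.elim f.promise g.promise
  act := Sum.elim f.act g.act

lemma expect_mix [Fintype ι'] (a b : ℝ) (f : Fam A ι) (g : Fam A ι') (F : A → ℝ × ℝ → ℝ) :
    (f.mix a b g).expect F = a * f.expect F + b * g.expect F := by
  simp [expect, mix, point, Fintype.sum_sum_type, mul_sum, mul_assoc]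

section Pool

variable [DecidableEq S] (f : Fam A ι) (τ : ι → S)

def poolWeight (s : S) : ℝ := ∑ i with τ i = s, f.prob i

/-- Signals of zero weight get the fallback point `z₀`: their center of mass is the junk
value `0`. -/
def poolPoint (z₀ : ℝ × ℝ) (s : S) : ℝ × ℝ :=
  if f.poolWeight τ s = 0 then z₀ else (univ.filter (τ · = s)).centerMass f.prob f.point

def pool (α : S → A) (a₀ : A) (z₀ : ℝ × ℝ) : Fam A S where
  prob := f.poolWeight τ
  belief s := (f.poolPoint τ z₀ s).1
  promise s := (f.poolPoint τ z₀ s).2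
  act s := if f.poolWeight τ s = 0 then a₀ else α s

variable {f τ} {α : S → A} {a₀ : A} {z₀ : ℝ × ℝ} {K : A → Set (ℝ × ℝ)}

lemma pool_prob_nonneg (hprob : ∀ i, 0 ≤ f.prob i) (s : S) :
    0 ≤ (f.pool τ α a₀ z₀).prob s :=
  sum_nonneg fun i _ => hprob i

lemma pool_point_mem (hK : ∀ a, Convex ℝ (K a)) (hprob : ∀ i, 0 ≤ f.prob i)
    (hf : ∀ i, f.point i ∈ K (f.act i)) (hact : ∀ i, f.act i = α (τ i)) (hz₀ : z₀ ∈ K a₀)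
    (s : S) : (f.pool τ α a₀ z₀).point s ∈ K ((f.pool τ α a₀ z₀).act s) := by
  change f.poolPoint τ z₀ s ∈ K (if f.poolWeight τ s = 0 then a₀ else α s)
  unfold poolPoint
  split_ifs with h
  · exact hz₀
  · refine (hK (α s)).centerMass_mem (fun i _ => hprob i)
      ((sum_nonneg fun i _ => hprob i).lt_of_ne (Ne.symm h)) fun i hi => ?_
    rw [← (mem_filter.1 hi).2, ← hact]
    exact hf i

lemma expect_le_expect_pool [Fintype S] {F : A → ℝ × ℝ → ℝ}
    (hF : ∀ a, ConcaveOn ℝ (K a) (F a)) (hprob : ∀ i, 0 ≤ f.prob i)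
    (hf : ∀ i, f.point i ∈ K (f.act i)) (hact : ∀ i, f.act i = α (τ i)) :
    f.expect F ≤ (f.pool τ α a₀ z₀).expect F := by
  rw [expect, ← sum_fiberwise univ τ]
  refine sum_le_sum fun s _ => ?_
  change _ ≤ f.poolWeight τ s *
    F (if f.poolWeight τ s = 0 then a₀ else α s) (f.poolPoint τ z₀ s)
  unfold poolPoint
  split_ifs with h
  · refine (sum_eq_zero fun i hi => ?_).le.trans (by rw [h, zero_mul])
    rw [(sum_eq_zero_iff_of_nonneg fun i _ => hprob i).1 h i hi, zero_mul]
  · calc ∑ i with τ i = s, f.prob i * F (f.act i) (f.point i)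
          = ∑ i with τ i = s, f.prob i * F (α s) (f.point i) :=
            sum_congr rfl fun i hi => by rw [hact, (mem_filter.1 hi).2]
      _ ≤ _ := (hF (α s)).sum_mul_le_mul_map_centerMass (fun i _ => hprob i)
            ((sum_nonneg fun i _ => hprob i).lt_of_ne (Ne.symm h))
            fun i hi => (mem_filter.1 hi).2 ▸ hact i ▸ hf i

lemma expect_pool_eq [Fintype S] {F : A → ℝ × ℝ → ℝ} (hF : ∀ a, ConcaveOn ℝ (K a) (F a))
    (hF' : ∀ a, ConvexOn ℝ (K a) (F a)) (hprob : ∀ i, 0 ≤ f.prob i)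
    (hf : ∀ i, f.point i ∈ K (f.act i)) (hact : ∀ i, f.act i = α (τ i)) :
    f.expect F = (f.pool τ α a₀ z₀).expect F := by
  refine le_antisymm (expect_le_expect_pool hF hprob hf hact) ?_
  have := expect_le_expect_pool (F := -F) (a₀ := a₀) (z₀ := z₀) (fun a => (hF' a).neg)
    hprob hf hact
  simpa only [expect, Pi.neg_apply, mul_neg, sum_neg_distrib, neg_le_neg_iff] using this

end Pool

end Fam

/-- With `v := u` and `V := Prod.snd` this is the agent's value of obeying the recommendation `a`
at the point `(p, w)`. -/
def discountedValue (v : A → Bool → ℝ) (δ : ℝ) (V : ℝ × ℝ → ℝ) (a : A) (z : ℝ × ℝ) : ℝ :=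
  (1 - δ) * euP v a z.1 + δ * V z

lemma concaveOn_discountedValue {v : A → Bool → ℝ} {δ : ℝ} {V : ℝ × ℝ → ℝ} {s : Set (ℝ × ℝ)}
    (hδ : 0 ≤ δ) (hV : ConcaveOn ℝ s V) (a : A) : ConcaveOn ℝ s (discountedValue v δ V a) := by
  refine ⟨hV.1, fun x hx y hy μ ν hμ hν hμν => ?_⟩
  have := mul_le_mul_of_nonneg_left (hV.2 hx hy hμ hν hμν) hδ
  simp only [discountedValue, smul_eq_mul, Prod.fst_add, Prod.smul_fst, euP_combo v a _ _ hμν]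
    at this ⊢
  linarith

lemma famPayoff_eq_expect [Fintype ι] (v : A → Bool → ℝ) (δ : ℝ) (V : ℝ × ℝ → ℝ) (f : Fam A ι) :
    famPayoff v δ V f = f.expect (discountedValue v δ V) :=
  rfl

section Feasible

variable [Fintype A] [Nonempty A] {u : A → Bool → ℝ} {δ : ℝ}

variable (u δ) in
def obedientSet (a : A) : Set (ℝ × ℝ) :=
  {z ∈ Wset u | mFun u z.1 ≤ discountedValue u δ Prod.snd a z}

lemma convex_obedientSet (hδ : 0 ≤ δ) (a : A) : Convex ℝ (obedientSet u δ a) := by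
  intro x hx y hy μ ν hμ hν hμν
  refine ⟨convex_Wset u hx.1 hy.1 hμ hν hμν, ?_⟩
  calc mFun u (μ • x + ν • y).1 = mFun u (μ • x.1 + ν • y.1) := rfl
    _ ≤ μ • mFun u x.1 + ν • mFun u y.1 :=
        (convexOn_mFun u).2 (Set.mem_univ _) (Set.mem_univ _) hμ hν hμν
    _ ≤ μ • discountedValue u δ Prod.snd a x + ν • discountedValue u δ Prod.snd a y := by
        gcongr
        exacts [hx.2, hy.2]
    _ ≤ _ := (concaveOn_discountedValue hδ ((LinearMap.snd ℝ ℝ ℝ).concaveOn convex_univ) a).2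
        (Set.mem_univ _) (Set.mem_univ _) hμ hν hμν

lemma mem_obedientSet_of_eq {q : ℝ} {a : A} (hq : q ∈ Set.Icc (0 : ℝ) 1) (hmM : mFun u q = MFun u q)
    (ha : euP u a q = mFun u q) : (q, mFun u q) ∈ obedientSet u δ a :=
  ⟨⟨hq, le_rfl, hmM.le⟩, le_of_eq <| by simp only [discountedValue, ha]; ring⟩

variable [Fintype ι]

lemma feasible_iff {pw : ℝ × ℝ} {f : Fam A ι} :
    Feasible u δ pw f ↔ (∀ i, 0 ≤ f.prob i) ∧ (∀ i, f.point i ∈ obedientSet u δ (f.act i)) ∧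
      pw.2 ≤ f.expect (discountedValue u δ Prod.snd) ∧
      f.expect (fun _ z => z.1) = pw.1 ∧ f.expect (fun _ _ => 1) = 1 := by
  simp only [Feasible, obedientSet, Fam.expect, Fam.point, discountedValue, mul_one]
  constructor
  · rintro ⟨hprob, hW, hIC, hPK, hbel, hsum⟩
    exact ⟨fun i => (hprob i).1, fun i => ⟨hW i, hIC i⟩, hPK, hbel, hsum⟩
  · rintro ⟨hprob, hK, hPK, hbel, hsum⟩
    exact ⟨fun i => ⟨hprob i, hsum ▸ single_le_sum (fun j _ => hprob j) (mem_univ i)⟩,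
      fun i => (hK i).1, fun i => (hK i).2, hPK, hbel, hsum⟩

lemma Feasible.of_le {p w₁ w₂ : ℝ} {f : Fam A ι} (hf : Feasible u δ (p, w₂) f) (hw : w₁ ≤ w₂) :
    Feasible u δ (p, w₁) f :=
  ⟨hf.1, hf.2.1, hf.2.2.1, hw.trans hf.2.2.2.1, hf.2.2.2.2⟩

lemma Feasible.mix [Fintype ι'] {x y : ℝ × ℝ} {f : Fam A ι} {g : Fam A ι'}
    (hf : Feasible u δ x f) (hg : Feasible u δ y g) {a b : ℝ} (ha : 0 ≤ a) (hb : 0 ≤ b)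
    (hab : a + b = 1) : Feasible u δ (a • x + b • y) (f.mix a b g) := by
  rw [feasible_iff] at hf hg ⊢
  obtain ⟨hprob, hK, hPK, hbel, hsum⟩ := hf
  obtain ⟨hprob', hK', hPK', hbel', hsum'⟩ := hg
  refine ⟨?_, ?_, ?_, ?_, ?_⟩
  · rintro (i | i)
    exacts [mul_nonneg ha (hprob i), mul_nonneg hb (hprob' i)]
  · rintro (i | i)
    exacts [hK i, hK' i]
  all_goals simp only [Fam.expect_mix, Prod.fst_add, Prod.snd_add, Prod.smul_fst, Prod.smul_snd,
    smul_eq_mul]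
  · gcongr
  · rw [hbel, hbel']
  · rw [hsum, hsum', mul_one, mul_one, hab]

lemma Feasible.exists_pool [Fintype S] (hAS : Fintype.card A ≤ Fintype.card S) (hδ : 0 ≤ δ)
    {pw : ℝ × ℝ} {f : Fam A ι} (hf : Feasible u δ pw f) :
    ∃ g : Fam A S, Feasible u δ pw g ∧ ∀ (v : A → Bool → ℝ) (V : ℝ × ℝ → ℝ),
      ConcaveOn ℝ (Wset u) V → famPayoff v δ V f ≤ famPayoff v δ V g := by
  classical
  obtain ⟨e⟩ := Embedding.nonempty_of_card_le hAS
  obtain ⟨a₀, ha₀⟩ := exists_euP_eq_mFun u 0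
  have hact : ∀ i, f.act i = invFun e (e (f.act i)) :=
    fun i => (leftInverse_invFun e.injective _).symm
  have hconv : ∀ a, Convex ℝ (obedientSet u δ a) := convex_obedientSet hδ
  obtain ⟨hprob, hK, hPK, hbel, hsum⟩ := feasible_iff.1 hf
  have hz₀ : (0, mFun u 0) ∈ obedientSet u δ a₀ :=
    mem_obedientSet_of_eq ⟨le_rfl, zero_le_one⟩ (mFun_zero_eq_MFun u) ha₀
  refine ⟨f.pool (e ∘ f.act) (invFun e) a₀ (0, mFun u 0), feasible_iff.2
    ⟨Fam.pool_prob_nonneg hprob, Fam.pool_point_mem hconv hprob hK hact hz₀, ?_, ?_, ?_⟩,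
    fun v V hV => ?_⟩
  · exact hPK.trans (Fam.expect_le_expect_pool (fun a => concaveOn_discountedValue hδ
      ((LinearMap.snd ℝ ℝ ℝ).concaveOn (hconv a)) a) hprob hK hact)
  · exact (Fam.expect_pool_eq (fun a => (LinearMap.fst ℝ ℝ ℝ).concaveOn (hconv a))
      (fun a => (LinearMap.fst ℝ ℝ ℝ).convexOn (hconv a)) hprob hK hact).symm.trans hbel
  · exact (Fam.expect_pool_eq (fun a => concaveOn_const 1 (hconv a))
      (fun a => convexOn_const 1 (hconv a)) hprob hK hact).symm.trans hsum
  · exact Fam.expect_le_expect_pool (fun a => (concaveOn_discountedValue hδ hV a).subset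
      (fun z hz => hz.1) (hconv a)) hprob hK hact

lemma exists_feasible_bool {pw : ℝ × ℝ} (hpw : pw ∈ Wset u) :
    ∃ f : Fam A Bool, Feasible u δ pw f := by
  obtain ⟨⟨hp0, hp1⟩, -, hwM⟩ := hpw
  obtain ⟨a₀, ha₀⟩ := exists_euP_eq_mFun u 0
  obtain ⟨a₁, ha₁⟩ := exists_euP_eq_mFun u 1
  -- full revelation, followed by the static best response
  refine ⟨⟨fun b => if b then pw.1 else 1 - pw.1, fun b => if b then 1 else 0,
    fun b => mFun u (if b then 1 else 0), fun b => if b then a₁ else a₀⟩,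
    feasible_iff.2 ⟨?_, ?_, ?_, ?_, ?_⟩⟩
  · rintro (_ | _)
    · simpa using hp1
    · simpa using hp0
  · rintro (_ | _)
    exacts [mem_obedientSet_of_eq ⟨le_rfl, zero_le_one⟩ (mFun_zero_eq_MFun u) ha₀,
      mem_obedientSet_of_eq ⟨zero_le_one, le_rfl⟩ (mFun_one_eq_MFun u) ha₁]
  · rw [MFun_eq_endpoints, ← mFun_zero_eq_MFun, ← mFun_one_eq_MFun] at hwM
    simp [Fam.expect, Fam.point, discountedValue, ha₀, ha₁]
    linarith
  · simp [Fam.expect, Fam.point]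
  · simp [Fam.expect]

lemma famPayoff_le {v : A → Bool → ℝ} {V : ℝ × ℝ → ℝ} {B C : ℝ} (hδ : δ ∈ Set.Icc (0 : ℝ) 1)
    (hB : ∀ a, ∀ p ∈ Set.Icc (0 : ℝ) 1, euP v a p ≤ B) (hC : ∀ z ∈ Wset u, V z ≤ C)
    {pw : ℝ × ℝ} {f : Fam A ι} (hf : Feasible u δ pw f) :
    famPayoff v δ V f ≤ (1 - δ) * B + δ * C := by
  obtain ⟨hprob, hW, -, -, -, hsum⟩ := hf
  refine Fam.expect_le (F := discountedValue v δ V) (fun i => (hprob i).1) hsum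
    fun i => add_le_add ?_ ?_
  · exact mul_le_mul_of_nonneg_left (hB (f.act i) _ (hW i).1) (sub_nonneg.2 hδ.2)
  · exact mul_le_mul_of_nonneg_left (hC _ (hW i)) hδ.1

end Feasible

section Bellman

variable [Fintype A] [Nonempty A] [Fintype S] {u v : A → Bool → ℝ} {δ : ℝ} {V V' : ℝ × ℝ → ℝ}

lemma exists_feasible (hAS : Fintype.card A ≤ Fintype.card S) (hδ : 0 ≤ δ) {pw : ℝ × ℝ}
    (hpw : pw ∈ Wset u) : ∃ f : Fam A S, Feasible u δ pw f := by
  obtain ⟨f, hf⟩ := exists_feasible_bool (δ := δ) hpw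
  obtain ⟨g, hg, -⟩ := hf.exists_pool hAS hδ
  exact ⟨g, hg⟩

lemma famPayoff_le_bellman (hδ : δ ∈ Set.Icc (0 : ℝ) 1) (hV : BddAbove (V '' Wset u))
    {pw : ℝ × ℝ} {f : Fam A S} (hf : Feasible u δ pw f) :
    famPayoff v δ V f ≤ bellman (S := S) u v δ V pw := by
  obtain ⟨B, hB⟩ := exists_euP_le v
  obtain ⟨C, hC⟩ := hV
  refine le_csSup ⟨(1 - δ) * B + δ * C, ?_⟩ ⟨f, hf, rfl⟩
  rintro _ ⟨g, hg, rfl⟩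
  exact famPayoff_le hδ hB (fun z hz => hC ⟨z, hz, rfl⟩) hg

lemma bellman_le (hAS : Fintype.card A ≤ Fintype.card S) (hδ : 0 ≤ δ) {pw : ℝ × ℝ}
    (hpw : pw ∈ Wset u) {c : ℝ} (h : ∀ f : Fam A S, Feasible u δ pw f → famPayoff v δ V f ≤ c) :
    bellman (S := S) u v δ V pw ≤ c := by
  obtain ⟨f, hf⟩ := exists_feasible hAS hδ hpw
  exact csSup_le ⟨_, f, hf, rfl⟩ fun x ⟨g, hg, hx⟩ => hx ▸ h g hg

lemma exists_lt_famPayoff (hAS : Fintype.card A ≤ Fintype.card S) (hδ : 0 ≤ δ) {pw : ℝ × ℝ}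
    (hpw : pw ∈ Wset u) {c : ℝ} (hc : c < bellman (S := S) u v δ V pw) :
    ∃ f : Fam A S, Feasible u δ pw f ∧ c < famPayoff v δ V f := by
  obtain ⟨f, hf⟩ := exists_feasible hAS hδ hpw
  obtain ⟨x, ⟨g, hg, rfl⟩, hx⟩ := exists_lt_of_lt_csSup (s := {x | ∃ f : Fam A S,
    Feasible u δ pw f ∧ x = famPayoff v δ V f}) ⟨_, f, hf, rfl⟩ hc
  exact ⟨g, hg, hx⟩

lemma bddAbove_bellman (hAS : Fintype.card A ≤ Fintype.card S) (hδ : δ ∈ Set.Icc (0 : ℝ) 1)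
    (hV : BddAbove (V '' Wset u)) : BddAbove (bellman (S := S) u v δ V '' Wset u) := by
  obtain ⟨B, hB⟩ := exists_euP_le v
  obtain ⟨C, hC⟩ := hV
  refine ⟨(1 - δ) * B + δ * C, ?_⟩
  rintro _ ⟨pw, hpw, rfl⟩
  exact bellman_le hAS hδ.1 hpw fun f hf => famPayoff_le hδ hB (fun z hz => hC ⟨z, hz, rfl⟩) hf

lemma bellman_le_bellman_add (hAS : Fintype.card A ≤ Fintype.card S) (hδ : δ ∈ Set.Icc (0 : ℝ) 1)
    (hV' : BddAbove (V' '' Wset u)) {K : ℝ} (hK : ∀ z ∈ Wset u, V z ≤ V' z + K) {pw : ℝ × ℝ}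
    (hpw : pw ∈ Wset u) :
    bellman (S := S) u v δ V pw ≤ bellman (S := S) u v δ V' pw + δ * K := by
  refine bellman_le hAS hδ.1 hpw fun f hf => ?_
  have ⟨hprob, hW, _, _, _, hsum⟩ := hf
  have hle : ∀ i, discountedValue v δ V (f.act i) (f.point i)
      ≤ discountedValue v δ V' (f.act i) (f.point i) + δ * K := fun i => by
    have := mul_le_mul_of_nonneg_left (hK _ (hW i)) hδ.1
    simp only [discountedValue, Fam.point]
    linarith
  calc famPayoff v δ V f ≤ famPayoff v δ V' f + δ * K :=
        Fam.expect_le_expect_add (fun i => (hprob i).1) hsum hle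
    _ ≤ _ := by gcongr; exact famPayoff_le_bellman hδ hV' hf

lemma abs_bellman_sub_le (hAS : Fintype.card A ≤ Fintype.card S) (hδ : δ ∈ Set.Icc (0 : ℝ) 1)
    (hV : BddAbove (V '' Wset u)) (hV' : BddAbove (V' '' Wset u)) {K : ℝ}
    (hK : ∀ z ∈ Wset u, |V z - V' z| ≤ K) {pw : ℝ × ℝ} (hpw : pw ∈ Wset u) :
    |bellman (S := S) u v δ V pw - bellman (S := S) u v δ V' pw| ≤ δ * K := by
  rw [abs_sub_le_iff]
  constructor
  · linarith [bellman_le_bellman_add (v := v) (V := V) (V' := V') hAS hδ hV'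
      (fun z hz => by linarith [(abs_le.1 (hK z hz)).2]) hpw]
  · linarith [bellman_le_bellman_add (v := v) (V := V') (V' := V) hAS hδ hV
      (fun z hz => by linarith [(abs_le.1 (hK z hz)).1]) hpw]

lemma concaveOn_bellman (hAS : Fintype.card A ≤ Fintype.card S) (hδ : δ ∈ Set.Icc (0 : ℝ) 1)
    (hV : ConcaveOn ℝ (Wset u) V) (hVb : BddAbove (V '' Wset u)) :
    ConcaveOn ℝ (Wset u) (bellman (S := S) u v δ V) := by
  refine ⟨convex_Wset u, fun x hx y hy a b ha hb hab => le_of_forall_pos_le_add fun ε hε => ?_⟩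
  obtain ⟨f, hf, hfx⟩ := exists_lt_famPayoff (v := v) (V := V) hAS hδ.1 hx (sub_lt_self _ hε)
  obtain ⟨g, hg, hgy⟩ := exists_lt_famPayoff (v := v) (V := V) hAS hδ.1 hy (sub_lt_self _ hε)
  obtain ⟨h, hh, hfgh⟩ := (hf.mix hg ha hb hab).exists_pool hAS hδ.1
  calc a • bellman (S := S) u v δ V x + b • bellman (S := S) u v δ V y
      = a * (bellman (S := S) u v δ V x - ε) + b * (bellman (S := S) u v δ V y - ε) + ε := by
        simp only [smul_eq_mul]
        linear_combination ε * hab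
    _ ≤ a * famPayoff v δ V f + b * famPayoff v δ V g + ε := by gcongr
    _ = famPayoff v δ V (f.mix a b g) + ε := by simp only [famPayoff_eq_expect, Fam.expect_mix]
    _ ≤ bellman (S := S) u v δ V (a • x + b • y) + ε := by
        gcongr
        exact (hfgh v V hV).trans (famPayoff_le_bellman hδ hVb hh)

lemma bellman_le_bellman_of_le (hAS : Fintype.card A ≤ Fintype.card S)
    (hδ : δ ∈ Set.Icc (0 : ℝ) 1) (hV : BddAbove (V '' Wset u)) {p w₁ w₂ : ℝ}
    (hw₂ : (p, w₂) ∈ Wset u) (hw : w₁ ≤ w₂) :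
    bellman (S := S) u v δ V (p, w₂) ≤ bellman (S := S) u v δ V (p, w₁) :=
  bellman_le hAS hδ.1 hw₂ fun _ hf => famPayoff_le_bellman hδ hV (hf.of_le hw)

lemma concaveOn_bddAbove_bellman_iterate (hAS : Fintype.card A ≤ Fintype.card S)
    (hδ : δ ∈ Set.Icc (0 : ℝ) 1) (n : ℕ) :
    ConcaveOn ℝ (Wset u) ((bellman (S := S) u v δ)^[n] 0) ∧
      BddAbove ((bellman (S := S) u v δ)^[n] 0 '' Wset u) := by
  induction n with
  | zero => exact ⟨concaveOn_const 0 (convex_Wset u), 0, by rintro _ ⟨z, -, rfl⟩; rfl⟩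
  | succ n ih =>
    rw [iterate_succ_apply']
    exact ⟨concaveOn_bellman hAS hδ ih.1 ih.2, bddAbove_bellman hAS hδ ih.2⟩

lemma abs_sub_bellman_iterate_le (hAS : Fintype.card A ≤ Fintype.card S)
    (hδ : δ ∈ Set.Icc (0 : ℝ) 1) {C : ℝ} (hC : ∀ z ∈ Wset u, |V z| ≤ C)
    (hfix : ∀ z ∈ Wset u, bellman (S := S) u v δ V z = V z) (n : ℕ) :
    ∀ z ∈ Wset u, |V z - (bellman (S := S) u v δ)^[n] 0 z| ≤ C * δ ^ n := by
  have hV : BddAbove (V '' Wset u) := ⟨C, by rintro _ ⟨z, hz, rfl⟩; exact (abs_le.1 (hC z hz)).2⟩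
  induction n with
  | zero => simpa using hC
  | succ n ih =>
    intro z hz
    rw [← hfix z hz, iterate_succ_apply']
    exact (abs_bellman_sub_le hAS hδ hV (concaveOn_bddAbove_bellman_iterate hAS hδ n).2 ih
      hz).trans_eq (by ring)

lemma tendsto_bellman_iterate (hAS : Fintype.card A ≤ Fintype.card S)
    (hδ : δ ∈ Set.Ico (0 : ℝ) 1) {C : ℝ} (hC : ∀ z ∈ Wset u, |V z| ≤ C)
    (hfix : ∀ z ∈ Wset u, bellman (S := S) u v δ V z = V z) {z : ℝ × ℝ} (hz : z ∈ Wset u) :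
    Tendsto (fun n => (bellman (S := S) u v δ)^[n] 0 z) atTop (𝓝 (V z)) := by
  have h0 : Tendsto (fun n => C * δ ^ n) atTop (𝓝 0) := by
    simpa using (tendsto_pow_atTop_nhds_zero_of_lt_one hδ.1 hδ.2).const_mul C
  refine tendsto_iff_norm_sub_tendsto_zero.2 (squeeze_zero_norm (fun n => ?_) h0)
  rw [norm_norm, Real.norm_eq_abs, abs_sub_comm]
  exact abs_sub_bellman_iterate_le hAS ⟨hδ.1, hδ.2.le⟩ hC hfix n z hz

end Bellman

end

theorem valueFunction_concave_and_decreasing_in_w_general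
    {A S : Type*} [Fintype A] [Nonempty A] [Fintype S]
    (u v : A → Bool → ℝ) (δ : ℝ)
    (hδ : δ ∈ Set.Ioo (0 : ℝ) 1)
    (hAS : Fintype.card A ≤ Fintype.card S)
    (Vstar : ℝ × ℝ → ℝ) (hVb : BddOnW u Vstar)
    (hVfix : ∀ pw ∈ Wset u, bellman (S := S) u v δ Vstar pw = Vstar pw) :
    ConcaveOn ℝ (Wset u) Vstar ∧
    (∀ p : ℝ, p ∈ Set.Icc (0 : ℝ) 1 → ∀ w₁ w₂ : ℝ,
      mFun u p ≤ w₁ → w₁ ≤ w₂ → w₂ ≤ MFun u p → Vstar (p, w₂) ≤ Vstar (p, w₁)) := by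
  have hδ' : δ ∈ Set.Icc (0 : ℝ) 1 := Set.Ioo_subset_Icc_self hδ
  obtain ⟨C, hC⟩ := hVb
  refine ⟨concaveOn_of_tendsto (fun n => (concaveOn_bddAbove_bellman_iterate hAS hδ' n).1)
    fun z hz => tendsto_bellman_iterate hAS (Set.Ioo_subset_Ico_self hδ) hC hVfix hz, ?_⟩
  intro p hp w₁ w₂ hm hw hM
  have hw₁ : (p, w₁) ∈ Wset u := ⟨hp, hm, hw.trans hM⟩
  have hw₂ : (p, w₂) ∈ Wset u := ⟨hp, hm.trans hw, hM⟩
  rw [← hVfix _ hw₁, ← hVfix _ hw₂]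
  exact bellman_le_bellman_of_le hAS hδ'
    ⟨C, by rintro _ ⟨z, hz, rfl⟩; exact (abs_le.1 (hC z hz)).2⟩ hw₂ hw

/-- the unique bounded fixed point `V*` of `T` is concave on `W` and,
for each fixed belief `p`, weakly decreasing in the promised utility `w`. -/
theorem valueFunction_concave_and_decreasing_in_w
    {A S : Type*} [Fintype A] [Nonempty A] [Fintype S]
    (u v : A → Bool → ℝ) (δ : ℝ) (astar : A)
    (hδ : δ ∈ Set.Ioo (0 : ℝ) 1)
    (hS2 : 2 ≤ Fintype.card S) (hAS : Fintype.card A ≤ Fintype.card S)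
    (hv0 : 0 < v astar false) (hv1 : 0 < v astar true)
    (hvz : ∀ a : A, a ≠ astar → v a false = 0 ∧ v a true = 0)
    (Vstar : ℝ × ℝ → ℝ) (hVb : BddOnW u Vstar)
    (hVfix : ∀ pw ∈ Wset u, bellman (S := S) u v δ Vstar pw = Vstar pw) :
    ConcaveOn ℝ (Wset u) Vstar ∧
    (∀ p : ℝ, p ∈ Set.Icc (0 : ℝ) 1 → ∀ w₁ w₂ : ℝ,
      mFun u p ≤ w₁ → w₁ ≤ w₂ → w₂ ≤ MFun u p → Vstar (p, w₂) ≤ Vstar (p, w₁)) :=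
  valueFunction_concave_and_decreasing_in_w_general u v δ hδ hAS Vstar hVb hVfix
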